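/- Fix D ≥ 0 and ε, δ ∈ [0,1). For every positive integer n such that G^δ_{D,ε}(X^n) < +∞, it holds that (G^δ_{D,ε}(X^n) − 1)/n < R*(n, D, ε, δ) ≤ R̃(n, D, ε, δ) ≤ (G^δ_{D,ε}(X^n) + 3)/n. In particular, both R*(n,D,ε,δ) and R̃(n,D,ε,δ) equal (1/n)·G^δ_{D,ε}(X^n) + O(1/n). -/

import Mathlib

open scoped ENNReal
open MeasureTheory

noncomputable section

/-- The smooth max entropy `H^δ(P)` (base 2) of a probability distribution `P`
on a finite alphabet `𝒴`: the least `log₂ |𝒲|` over subsets `𝒲 ⊆ 𝒴` of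
probability at least `1 - δ`. -/
def smoothMaxEnt {𝒴 : Type} [Fintype 𝒴] (P : 𝒴 → ℝ≥0∞) (δ : ℝ) : ℝ :=
  sInf {r : ℝ | ∃ W : Finset 𝒴,
    ENNReal.ofReal (1 - δ) ≤ ∑ y ∈ W, P y ∧ r = Real.logb 2 (W.card)}

/-- A channel (conditional probability distribution) from `𝒳` to `𝒴`. -/
def IsChannel {𝒳 𝒴 : Type} [Fintype 𝒴] (W : 𝒳 → 𝒴 → ℝ≥0∞) : Prop :=
  ∀ x, ∑ y, W x y = 1

/-- The output marginal distribution of the channel `W` with input distribution `pX`. -/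
def marginal {𝒳 𝒴 : Type} [Fintype 𝒳] (pX : 𝒳 → ℝ≥0∞) (W : 𝒳 → 𝒴 → ℝ≥0∞) : 𝒴 → ℝ≥0∞ :=
  fun y => ∑ x, pX x * W x y

/-- `Pr{d(X,Y) > D}` for the joint law `pX · W`. -/
def chExcess {𝒳 𝒴 : Type} [Fintype 𝒳] [Fintype 𝒴] (pX : 𝒳 → ℝ≥0∞) (W : 𝒳 → 𝒴 → ℝ≥0∞)
    (d : 𝒳 → 𝒴 → ℝ) (D : ℝ) : ℝ≥0∞ :=
  ∑ x, ∑ y, if D < d x y then pX x * W x y else 0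

/-- The quantity `G^δ_{D,ε}(X)` as a value in `[0,∞]`: the infimum of the smooth max
entropy of the output marginal, over channels whose excess-distortion probability is
at most `ε`; it equals `+∞` if no such channel exists. -/
def Gq {𝒳 𝒴 : Type} [Fintype 𝒳] [Fintype 𝒴] (pX : 𝒳 → ℝ≥0∞) (d : 𝒳 → 𝒴 → ℝ)
    (D ε δ : ℝ) : ℝ≥0∞ :=
  ⨅ (W : 𝒳 → 𝒴 → ℝ≥0∞) (_ : IsChannel W) (_ : chExcess pX W d D ≤ ENNReal.ofReal ε),
    ENNReal.ofReal (smoothMaxEnt (marginal pX W) δ)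

/-- `(f, g)` is a `(D, R, ε, δ)` code: `f` is a (possibly stochastic) encoder assigning
to each source symbol a probability distribution on binary strings (`List Bool`),
`g` is a decoder, the excess distortion probability is at most `ε`, and the
overflow probability is at most `δ`. -/
def IsCode {𝒳 𝒴 : Type} [Fintype 𝒳] (pX : 𝒳 → ℝ≥0∞) (d : 𝒳 → 𝒴 → ℝ)
    (D R ε δ : ℝ) (f : 𝒳 → List Bool → ℝ≥0∞) (g : List Bool → 𝒴) : Prop :=
  (∀ x, ∑' w : List Bool, f x w = 1) ∧
  (∑ x, ∑' w : List Bool, (if D < d x (g w) then pX x * f x w else 0))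
      ≤ ENNReal.ofReal ε ∧
  (∑ x, ∑' w : List Bool, (if R < (w.length : ℝ) then pX x * f x w else 0))
      ≤ ENNReal.ofReal δ

/-- The deterministic encoder `f : 𝒳 → {0,1}*` viewed as a stochastic encoder. -/
def detEnc {𝒳 : Type} (f : 𝒳 → List Bool) : 𝒳 → List Bool → ℝ≥0∞ :=
  fun x w => if w = f x then 1 else 0

/-- The sum of the `j` largest values of `P`. -/
def topSum {𝒴 : Type} [Fintype 𝒴] (P : 𝒴 → ℝ≥0∞) (j : ℕ) : ℝ≥0∞ :=
  ⨆ (W : Finset 𝒴) (_ : W.card ≤ j), ∑ y ∈ W, P y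

/-!
Converse: a code `(f, g)` induces the channel `x ↦ g (f x)`, whose output lies with
probability at least `1 - δ` in the image under `g` of the `2 ^ (⌊nR⌋ + 1) - 1` strings of length
at most `nR`; hence `G < ⌊nR⌋ + 1`, i.e. `⌊G⌋ ≤ nR`, which gives the strict lower bound.

Achievability: take a channel within `1` of the infimum defining `G` and a set `W₀` with
`log₂ |W₀| < G + 1` carrying probability `1 - δ` of its output, and derandomise it. Send `x` to a
`D`-good reproduction inside `W₀` when there is one. For every other `x` the channel produces
excess distortion or an output outside `W₀` with conditional probability one, so these symbols
have total mass at most `ε + δ`; a greedy split charges them to the distortion budget `ε` (sent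
into `W₀`) or to the overflow budget `δ` (sent to a `D`-good reproduction outside `W₀`), except
for one symbol whose reproduction is added to `W₀`. The resulting `|W₀| + 1` reproductions get
codewords of `⌊log₂ |W₀|⌋ + 1` bits, all others longer ones.
-/

open Finset

lemma ENNReal.ofReal_one_sub_le_of_one_le_add {a b : ℝ≥0∞} {δ : ℝ} (h : 1 ≤ a + b)
    (hδ : 0 ≤ δ) (hb : b ≤ ENNReal.ofReal δ) : ENNReal.ofReal (1 - δ) ≤ a := by
  rw [ENNReal.ofReal_sub 1 hδ, ENNReal.ofReal_one, tsub_le_iff_right]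
  exact h.trans (by gcongr)

lemma ENNReal.le_ofReal_of_add_eq_one {a b : ℝ≥0∞} {δ : ℝ} (h : a + b = 1)
    (ha : ENNReal.ofReal (1 - δ) ≤ a) : b ≤ ENNReal.ofReal δ := by
  have hb : b = 1 - a := ENNReal.eq_sub_of_add_eq (ne_top_of_le_ne_top ENNReal.one_ne_top
    (h ▸ le_self_add)) (by rw [add_comm, h])
  rw [hb, tsub_le_iff_right]
  calc (1 : ℝ≥0∞) = ENNReal.ofReal (δ + (1 - δ)) := by simp
    _ ≤ ENNReal.ofReal δ + ENNReal.ofReal (1 - δ) := ENNReal.ofReal_add_le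
    _ ≤ ENNReal.ofReal δ + a := by gcongr

lemma ENNReal.sum_ite_le_sum_of_imp {ι : Type} [Fintype ι] {P : ι → Prop} [DecidablePred P]
    {S : Finset ι} (h : ∀ x, P x → x ∈ S) (q : ι → ℝ≥0∞) :
    ∑ x, (if P x then q x else 0) ≤ ∑ x ∈ S, q x := by
  rw [← sum_filter]
  exact sum_le_sum_of_subset fun x hx => h x (mem_filter.mp hx).2

lemma Real.logb_two_natCast_lt {m j : ℕ} (hj : j ≠ 0) (h : m < 2 ^ j) : Real.logb 2 m < j := by
  have hfloor : ⌊Real.logb 2 m⌋₊ = Nat.log 2 m := by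
    exact_mod_cast Real.natFloor_logb_natCast 2 m
  calc Real.logb 2 m < ⌊Real.logb 2 m⌋₊ + 1 := Nat.lt_floor_add_one _
    _ ≤ j := by rw [hfloor]; exact_mod_cast Nat.log_lt_of_lt_pow' hj h

lemma Real.logb_two_natCast_nonneg (m : ℕ) : 0 ≤ Real.logb 2 m := by
  rcases m.eq_zero_or_pos with rfl | hm
  · simp
  · exact Real.logb_nonneg one_lt_two (by exact_mod_cast hm)

def listsOfLengthLE (j : ℕ) : Finset (List Bool) :=
  univ.image fun v : Σ i : Fin (j + 1), List.Vector Bool i => v.2.toList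

lemma mem_listsOfLengthLE {j : ℕ} {w : List Bool} (hw : w.length ≤ j) :
    w ∈ listsOfLengthLE j :=
  mem_image.mpr ⟨⟨⟨w.length, Nat.lt_succ_of_le hw⟩, ⟨w, rfl⟩⟩, mem_univ _, rfl⟩

lemma card_listsOfLengthLE_lt (j : ℕ) : (listsOfLengthLE j).card < 2 ^ (j + 1) :=
  calc (listsOfLengthLE j).card ≤ Fintype.card (Σ i : Fin (j + 1), List.Vector Bool i) :=
        card_image_le
    _ = ∑ i ∈ range (j + 1), 2 ^ i := by
        simp [Fintype.card_sigma, card_vector, Fin.sum_univ_eq_sum_range (fun i => 2 ^ i)]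
    _ < 2 ^ (j + 1) := Nat.geomSum_lt le_rfl fun _ => mem_range.mp

lemma exists_injective_length_le {𝒴 : Type} [Fintype 𝒴] (T : Finset 𝒴) {k : ℕ}
    (hT : T.card ≤ 2 ^ k) :
    ∃ c : 𝒴 → List Bool, Function.Injective c ∧ ∀ y ∈ T, (c y).length ≤ k := by
  classical
  obtain ⟨e⟩ : Nonempty (T ↪ List.Vector Bool k) :=
    Function.Embedding.nonempty_of_card_le (by simpa [card_vector] using hT)
  let c : 𝒴 → List Bool := fun y =>
    if h : y ∈ T then (e ⟨y, h⟩).toList else List.replicate (k + 1 + Fintype.equivFin 𝒴 y) true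
  have hc_in : ∀ y (h : y ∈ T), c y = (e ⟨y, h⟩).toList := fun y h => dif_pos h
  have hc_out : ∀ y, y ∉ T → (c y).length = k + 1 + Fintype.equivFin 𝒴 y := fun y h => by
    simp [c, h]
  refine ⟨c, fun y₁ y₂ h => ?_, fun y hy => by simp [hc_in y hy]⟩
  by_cases h₁ : y₁ ∈ T <;> by_cases h₂ : y₂ ∈ T
  · rw [hc_in y₁ h₁, hc_in y₂ h₂] at h
    exact congrArg Subtype.val (e.injective (List.Vector.toList_injective h))
  · have := congrArg List.length h
    rw [hc_in y₁ h₁, hc_out y₂ h₂] at this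
    simp at this; omega
  · have := congrArg List.length h
    rw [hc_out y₁ h₁, hc_in y₂ h₂] at this
    simp at this; omega
  · have := congrArg List.length h
    rw [hc_out y₁ h₁, hc_out y₂ h₂] at this
    exact (Fintype.equivFin 𝒴).injective (Fin.ext (by omega))

/-- Greedy (fractional-knapsack) split: `E` holds the one item that straddles the budget `a`. -/
lemma Finset.exists_split_sum_le {ι : Type} [DecidableEq ι] {B F : Finset ι} (hFB : F ⊆ B)
    (p : ι → ℝ≥0∞) {a b : ℝ≥0∞} (hF : ∑ x ∈ F, p x ≤ a) (hB : ∑ x ∈ B, p x ≤ a + b) :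
    ∃ S, F ⊆ S ∧ S ⊆ B ∧ ∑ x ∈ S, p x ≤ a ∧
      ∃ E : Finset ι, E.card ≤ 1 ∧ ∑ x ∈ (B \ S) \ E, p x ≤ b := by
  obtain ⟨S, hS, hSmax⟩ := (B.powerset.filter fun S => F ⊆ S ∧ ∑ x ∈ S, p x ≤ a).exists_max_image
    card ⟨F, mem_filter.mpr ⟨mem_powerset.mpr hFB, subset_rfl, hF⟩⟩
  simp only [mem_filter, mem_powerset] at hS hSmax
  obtain ⟨hSB, hFS, hSa⟩ := hS
  refine ⟨S, hFS, hSB, hSa, ?_⟩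
  rcases (B \ S).eq_empty_or_nonempty with hBS | ⟨e, he⟩
  · exact ⟨∅, by simp, by simp [hBS]⟩
  refine ⟨{e}, by simp, ?_⟩
  obtain ⟨heB, heS⟩ := mem_sdiff.mp he
  have hover : a < p e + ∑ x ∈ S, p x := by
    by_contra! hle
    have := hSmax (insert e S) ⟨insert_subset heB hSB, hFS.trans (subset_insert e S),
      by rwa [sum_insert heS]⟩
    rw [card_insert_of_notMem heS] at this
    omega
  by_contra! hrest
  have hsplit : ∑ x ∈ B, p x = ∑ x ∈ (B \ S) \ {e}, p x + (p e + ∑ x ∈ S, p x) := by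
    rw [sdiff_singleton_eq_erase, ← add_assoc, add_comm _ (p e), add_sum_erase _ _ he,
      sum_sdiff hSB]
  exact (hB.trans_lt (hsplit ▸ add_comm a b ▸ ENNReal.add_lt_add hrest hover)).false

section SmoothMaxEnt

variable {𝒴 : Type} [Fintype 𝒴] (P : 𝒴 → ℝ≥0∞) (δ : ℝ)

lemma finite_smoothMaxEnt_candidates :
    {r : ℝ | ∃ W : Finset 𝒴,
      ENNReal.ofReal (1 - δ) ≤ ∑ y ∈ W, P y ∧ r = Real.logb 2 W.card}.Finite :=
  (Set.finite_range fun W : Finset 𝒴 => Real.logb 2 W.card).subset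
    fun _ ⟨W, _, hr⟩ => ⟨W, hr.symm⟩

lemma smoothMaxEnt_le {W : Finset 𝒴} (hW : ENNReal.ofReal (1 - δ) ≤ ∑ y ∈ W, P y) :
    smoothMaxEnt P δ ≤ Real.logb 2 W.card :=
  csInf_le (finite_smoothMaxEnt_candidates P δ).bddBelow ⟨W, hW, rfl⟩

lemma exists_smoothMaxEnt_eq (h : ENNReal.ofReal (1 - δ) ≤ ∑ y, P y) :
    ∃ W : Finset 𝒴, ENNReal.ofReal (1 - δ) ≤ ∑ y ∈ W, P y ∧
      smoothMaxEnt P δ = Real.logb 2 W.card := by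
  have hne : {r : ℝ | ∃ W : Finset 𝒴,
      ENNReal.ofReal (1 - δ) ≤ ∑ y ∈ W, P y ∧ r = Real.logb 2 W.card}.Nonempty :=
    ⟨_, univ, h, rfl⟩
  exact hne.csInf_mem (finite_smoothMaxEnt_candidates P δ)

end SmoothMaxEnt

section Channel

variable {𝒳 𝒴 : Type} [Fintype 𝒳] [Fintype 𝒴] {p : 𝒳 → ℝ≥0∞} {W : 𝒳 → 𝒴 → ℝ≥0∞}
  {d : 𝒳 → 𝒴 → ℝ} {D ε δ : ℝ}

lemma sum_marginal (hp : ∑ x, p x = 1) (hW : IsChannel W) : ∑ y, marginal p W y = 1 := by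
  simp only [marginal]
  rw [sum_comm]
  simp [← mul_sum, hW _, hp]

lemma Gq_le_of_isChannel (hW : IsChannel W) (hex : chExcess p W d D ≤ ENNReal.ofReal ε) :
    Gq p d D ε δ ≤ ENNReal.ofReal (smoothMaxEnt (marginal p W) δ) :=
  iInf_le_of_le W (iInf_le_of_le hW (iInf_le _ hex))

lemma exists_isChannel_of_Gq_lt {c : ℝ≥0∞} (h : Gq p d D ε δ < c) :
    ∃ W, IsChannel W ∧ chExcess p W d D ≤ ENNReal.ofReal ε ∧
      ENNReal.ofReal (smoothMaxEnt (marginal p W) δ) < c := by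
  simpa only [Gq, iInf_lt_iff, exists_prop] using h

end Channel

section Converse

variable {𝒳 𝒴 : Type}

open Classical in
def codeChannel (f : 𝒳 → List Bool → ℝ≥0∞) (g : List Bool → 𝒴) : 𝒳 → 𝒴 → ℝ≥0∞ :=
  fun x y => ∑' w, if g w = y then f x w else 0

lemma sum_mul_codeChannel [Fintype 𝒴] (f : 𝒳 → List Bool → ℝ≥0∞) (g : List Bool → 𝒴)
    (F : 𝒴 → ℝ≥0∞) (x : 𝒳) : ∑ y, F y * codeChannel f g x y = ∑' w, F (g w) * f x w := by
  simp only [codeChannel, ← ENNReal.tsum_mul_left]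
  rw [← Summable.tsum_finsetSum fun _ _ => ENNReal.summable]
  refine tsum_congr fun w => ?_
  classical
  simp [mul_ite, Finset.sum_ite_eq]

variable [Fintype 𝒳] [Fintype 𝒴] {p : 𝒳 → ℝ≥0∞} {d : 𝒳 → 𝒴 → ℝ} {D R ε δ : ℝ}
  {f : 𝒳 → List Bool → ℝ≥0∞} {g : List Bool → 𝒴}

lemma IsCode.isChannel_codeChannel (hcode : IsCode p d D R ε δ f g) :
    IsChannel (codeChannel f g) := fun x => by
  simpa using (sum_mul_codeChannel f g (fun _ => 1) x).trans (by simpa using hcode.1 x)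

lemma IsCode.chExcess_codeChannel_le (hcode : IsCode p d D R ε δ f g) :
    chExcess p (codeChannel f g) d D ≤ ENNReal.ofReal ε := by
  refine le_of_eq_of_le (sum_congr rfl fun x _ => ?_) hcode.2.1
  have := sum_mul_codeChannel f g (fun y => if D < d x y then p x else 0) x
  simpa only [ite_mul, zero_mul] using this

lemma IsCode.ofReal_one_sub_le_sum_marginal [DecidableEq 𝒴] (hp : ∑ x, p x = 1) (hδ : 0 ≤ δ)
    (hcode : IsCode p d D R ε δ f g) :
    ENNReal.ofReal (1 - δ) ≤
      ∑ y ∈ (listsOfLengthLE ⌊R⌋₊).image g, marginal p (codeChannel f g) y := by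
  set W₀ := (listsOfLengthLE ⌊R⌋₊).image g
  have hmass : ∑ y ∈ W₀, marginal p (codeChannel f g) y
      = ∑ x, ∑' w, if g w ∈ W₀ then p x * f x w else 0 := by
    simp only [marginal]
    rw [sum_comm]
    refine sum_congr rfl fun x _ => ?_
    have := sum_mul_codeChannel f g (fun y => if y ∈ W₀ then p x else 0) x
    simp only [ite_mul, zero_mul, sum_ite_mem, univ_inter] at this
    simpa only [mul_sum] using this
  rw [hmass]
  refine ENNReal.ofReal_one_sub_le_of_one_le_add ?_ hδ hcode.2.2
  calc (1 : ℝ≥0∞) = ∑ x, ∑' w, p x * f x w := by simp [ENNReal.tsum_mul_left, hcode.1, hp]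
    _ ≤ _ := by
      rw [← sum_add_distrib]
      refine sum_le_sum fun x _ => ?_
      rw [← ENNReal.tsum_add]
      refine ENNReal.tsum_le_tsum fun w => ?_
      by_cases hw : R < w.length
      · simp [hw]
      · have : g w ∈ W₀ :=
          mem_image_of_mem g (mem_listsOfLengthLE (Nat.le_floor (not_lt.mp hw)))
        simp [hw, this]

theorem IsCode.toReal_Gq_lt (hp : ∑ x, p x = 1) (hδ : 0 ≤ δ)
    (hcode : IsCode p d D R ε δ f g) : (Gq p d D ε δ).toReal < ⌊R⌋₊ + 1 := by
  classical
  have hcard := (card_image_le (s := listsOfLengthLE ⌊R⌋₊) (f := g)).trans_lt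
    (card_listsOfLengthLE_lt ⌊R⌋₊)
  calc (Gq p d D ε δ).toReal
      ≤ Real.logb 2 ((listsOfLengthLE ⌊R⌋₊).image g).card := by
        refine ENNReal.toReal_le_of_le_ofReal (Real.logb_two_natCast_nonneg _) ?_
        refine (Gq_le_of_isChannel hcode.isChannel_codeChannel
          hcode.chExcess_codeChannel_le).trans (ENNReal.ofReal_le_ofReal ?_)
        exact smoothMaxEnt_le _ _ (hcode.ofReal_one_sub_le_sum_marginal hp hδ)
    _ < ⌊R⌋₊ + 1 := by exact_mod_cast Real.logb_two_natCast_lt (Nat.succ_ne_zero _) hcard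

end Converse

lemma isCode_detEnc_iff {𝒳 𝒴 : Type} [Fintype 𝒳] {p : 𝒳 → ℝ≥0∞} {d : 𝒳 → 𝒴 → ℝ}
    {D R ε δ : ℝ} {f : 𝒳 → List Bool} {g : List Bool → 𝒴} :
    IsCode p d D R ε δ (detEnc f) g ↔
      (∑ x, if D < d x (g (f x)) then p x else 0) ≤ ENNReal.ofReal ε ∧
      (∑ x, if R < (f x).length then p x else 0) ≤ ENNReal.ofReal δ := by
  have hsum : ∀ (P : List Bool → Prop) [DecidablePred P] (q : ℝ≥0∞) (x : 𝒳),
      ∑' w, (if P w then q * detEnc f x w else 0) = if P (f x) then q else 0 := by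
    intro P _ q x
    rw [← tsum_ite_eq (f x) fun w => if P w then q else 0]
    refine tsum_congr fun w => ?_
    by_cases hw : w = f x <;> simp [detEnc, hw]
  have hone : ∀ x, ∑' w, detEnc f x w = 1 := fun x => by simp [detEnc]
  simp only [IsCode, hsum, hone, implies_true, true_and]

section Achievability

variable {𝒳 𝒴 : Type} [Fintype 𝒳] [Fintype 𝒴] {p : 𝒳 → ℝ≥0∞} {W : 𝒳 → 𝒴 → ℝ≥0∞}
  {d : 𝒳 → 𝒴 → ℝ} {D ε δ : ℝ}

/-- For a symbol all of whose `D`-good reproductions lie outside `W₀`, every output of the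
channel either has excess distortion or falls outside `W₀`. -/
lemma sum_le_chExcess_add_sum_compl_marginal [DecidableEq 𝒴] (hW : IsChannel W)
    (W₀ : Finset 𝒴) :
    ∑ x ∈ univ.filter (fun x => ∀ y ∈ W₀, D < d x y), p x ≤
      chExcess p W d D + ∑ y ∈ W₀ᶜ, marginal p W y := by
  simp only [chExcess, marginal]
  rw [sum_comm (s := W₀ᶜ), ← sum_add_distrib]
  refine (sum_le_sum_of_subset (filter_subset _ _)).trans' (sum_le_sum fun x hx => ?_)
  have hx := (mem_filter.mp hx).2
  calc p x = ∑ y, p x * W x y := by rw [← mul_sum, hW x, mul_one]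
    _ ≤ ∑ y, ((if D < d x y then p x * W x y else 0) + if y ∈ W₀ᶜ then p x * W x y else 0) :=
        sum_le_sum fun y _ => by
          by_cases hy : y ∈ W₀
          · simp [hx y hy]
          · simp [hy]
    _ = _ := by rw [sum_add_distrib, sum_ite_mem, univ_inter]

lemma exists_map_sum_le [DecidableEq 𝒳] [DecidableEq 𝒴] (hW : IsChannel W)
    {W₀ : Finset 𝒴} (hW₀ : W₀.Nonempty) {a b : ℝ≥0∞} (ha : chExcess p W d D ≤ a)
    (hb : ∑ y ∈ W₀ᶜ, marginal p W y ≤ b) :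
    ∃ (φ : 𝒳 → 𝒴) (T : Finset 𝒴), T.card ≤ W₀.card + 1 ∧
      (∑ x, if D < d x (φ x) then p x else 0) ≤ a ∧ (∑ x, if φ x ∉ T then p x else 0) ≤ b := by
  set B := univ.filter fun x => ∀ y ∈ W₀, D < d x y
  set F := univ.filter fun x => ∀ y ∈ (univ : Finset 𝒴), D < d x y
  have hFB : F ⊆ B := fun x hx =>
    mem_filter.mpr ⟨mem_univ x, fun y _ => (mem_filter.mp hx).2 y (mem_univ y)⟩
  have hF : ∑ x ∈ F, p x ≤ a := by
    have := sum_le_chExcess_add_sum_compl_marginal (p := p) (d := d) (D := D) hW univ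
    rw [compl_univ, sum_empty, add_zero] at this
    exact this.trans ha
  have hB : ∑ x ∈ B, p x ≤ a + b :=
    (sum_le_chExcess_add_sum_compl_marginal hW W₀).trans (add_le_add ha hb)
  obtain ⟨S, hFS, hSB, hSa, E, hE, hrest⟩ := exists_split_sum_le hFB p hF hB
  obtain ⟨w₀, hw₀⟩ := hW₀
  -- good distortion inside `W₀` if possible; otherwise `S` pays in distortion, the rest in length
  have hφ : ∀ x, ∃ y, (D < d x y → x ∈ S) ∧ (y ∉ W₀ → x ∈ B \ S) := by
    intro x
    by_cases hgood : ∃ y ∈ W₀, ¬ D < d x y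
    · obtain ⟨y, hy, hxy⟩ := hgood
      exact ⟨y, fun h => absurd h hxy, fun h => absurd hy h⟩
    push Not at hgood
    have hxB : x ∈ B := mem_filter.mpr ⟨mem_univ x, hgood⟩
    by_cases hxS : x ∈ S
    · exact ⟨w₀, fun _ => hxS, fun h => absurd hw₀ h⟩
    obtain ⟨y, hy⟩ : ∃ y, ¬ D < d x y := by
      by_contra! h
      exact hxS (hFS (mem_filter.mpr ⟨mem_univ x, fun y _ => h y⟩))
    exact ⟨y, fun h => absurd h hy, fun _ => mem_sdiff.mpr ⟨hxB, hxS⟩⟩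
  choose φ hφ using hφ
  refine ⟨φ, W₀ ∪ E.image φ, ?_, ?_, ?_⟩
  · have := card_image_le (s := E) (f := φ)
    have := card_union_le W₀ (E.image φ)
    omega
  · exact (ENNReal.sum_ite_le_sum_of_imp (fun x => (hφ x).1) p).trans hSa
  · refine (ENNReal.sum_ite_le_sum_of_imp (fun x hx => ?_) p).trans hrest
    simp only [mem_union, mem_image, not_or, not_exists, not_and] at hx
    exact mem_sdiff.mpr ⟨(hφ x).2 hx.1, fun hxE => hx.2 x hxE rfl⟩

lemma exists_detEnc_isCode_of_map [DecidableEq 𝒴] [Nonempty 𝒴] {R : ℝ} (φ : 𝒳 → 𝒴)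
    {T : Finset 𝒴} {k : ℕ} (hT : T.card ≤ 2 ^ k) (hk : (k : ℝ) ≤ R)
    (hε : (∑ x, if D < d x (φ x) then p x else 0) ≤ ENNReal.ofReal ε)
    (hδ : (∑ x, if φ x ∉ T then p x else 0) ≤ ENNReal.ofReal δ) :
    ∃ (f : 𝒳 → List Bool) (g : List Bool → 𝒴), IsCode p d D R ε δ (detEnc f) g := by
  obtain ⟨c, hc, hcT⟩ := exists_injective_length_le T hT
  refine ⟨c ∘ φ, Function.invFun c, isCode_detEnc_iff.mpr ⟨?_, hδ.trans' ?_⟩⟩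
  · simpa only [Function.comp_apply, Function.leftInverse_invFun hc _] using hε
  · refine sum_le_sum fun x _ => ?_
    by_cases hx : φ x ∈ T
    · have : ¬ R < (c (φ x)).length := not_lt.mpr (le_trans (by exact_mod_cast hcT _ hx) hk)
      simp [this]
    · simp only [hx, not_false_eq_true, if_true]
      split_ifs <;> simp

theorem exists_detEnc_isCode (hp : ∑ x, p x = 1) (hδ₀ : 0 ≤ δ) (hδ₁ : δ < 1)
    (hG : Gq p d D ε δ ≠ ⊤) {R : ℝ} (hR : (Gq p d D ε δ).toReal + 2 ≤ R) :
    ∃ (f : 𝒳 → List Bool) (g : List Bool → 𝒴), IsCode p d D R ε δ (detEnc f) g := by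
  classical
  obtain ⟨W, hW, hex, hH⟩ := exists_isChannel_of_Gq_lt (ENNReal.lt_add_right hG one_ne_zero)
  have hQ := sum_marginal hp hW
  obtain ⟨W₀, hmass, hHW₀⟩ := exists_smoothMaxEnt_eq (marginal p W) δ
    (hQ ▸ ENNReal.ofReal_le_one.mpr (by linarith))
  have hW₀ : W₀.Nonempty := nonempty_of_sum_ne_zero
    (ne_bot_of_le_ne_bot (ENNReal.ofReal_pos.mpr (by linarith)).ne' hmass)
  have hlog : Real.logb 2 W₀.card < (Gq p d D ε δ).toReal + 1 := by
    rw [hHW₀, ENNReal.ofReal_lt_iff_lt_toReal (Real.logb_two_natCast_nonneg _) (by finiteness),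
      ENNReal.toReal_add hG ENNReal.one_ne_top, ENNReal.toReal_one] at hH
    exact hH
  obtain ⟨φ, T, hT, hεφ, hδφ⟩ := exists_map_sum_le hW hW₀ hex
    (ENNReal.le_ofReal_of_add_eq_one ((sum_add_sum_compl W₀ _).trans hQ) hmass)
  have : Nonempty 𝒴 := hW₀.to_type
  refine exists_detEnc_isCode_of_map (k := Nat.log 2 W₀.card + 1) φ ?_ ?_ hεφ hδφ
  · exact hT.trans (Nat.lt_pow_succ_log_self one_lt_two _)
  · have := Real.natLog_le_logb W₀.card 2
    push_cast at this ⊢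
    linarith

end Achievability

lemma Int.floor_le_of_lt_natFloor_add_one {a r : ℝ} (hr : 0 ≤ r) (h : a < ⌊r⌋₊ + 1) :
    (⌊a⌋ : ℝ) ≤ r := by
  have : ⌊a⌋ < (⌊r⌋₊ : ℤ) + 1 := Int.floor_lt.mpr (by push_cast; exact h)
  calc (⌊a⌋ : ℝ) ≤ ⌊r⌋₊ := by exact_mod_cast Int.lt_add_one_iff.mp this
    _ ≤ r := Nat.floor_le hr

theorem stmt6_general {𝒳 𝒴 : Type} [Fintype 𝒳] [Fintype 𝒴]
    (n : ℕ) (hn : 0 < n)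
    (pXn : (Fin n → 𝒳) → ℝ≥0∞) (hpXn : ∑ x, pXn x = 1)
    (dn : (Fin n → 𝒳) → (Fin n → 𝒴) → ℝ)
    (D ε δ : ℝ) (hδ : 0 ≤ δ ∧ δ < 1)
    (hG : Gq pXn dn ((n : ℝ) * D) ε δ ≠ ⊤) :
    ((Gq pXn dn ((n : ℝ) * D) ε δ).toReal - 1) / n <
        sInf {R : ℝ | 0 ≤ R ∧ ∃ (f : (Fin n → 𝒳) → List Bool → ℝ≥0∞)
          (g : List Bool → (Fin n → 𝒴)),
          IsCode pXn dn ((n : ℝ) * D) ((n : ℝ) * R) ε δ f g} ∧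
      sInf {R : ℝ | 0 ≤ R ∧ ∃ (f : (Fin n → 𝒳) → List Bool → ℝ≥0∞)
          (g : List Bool → (Fin n → 𝒴)),
          IsCode pXn dn ((n : ℝ) * D) ((n : ℝ) * R) ε δ f g}
        ≤ sInf {R : ℝ | 0 ≤ R ∧ ∃ (f : (Fin n → 𝒳) → List Bool)
          (g : List Bool → (Fin n → 𝒴)),
          IsCode pXn dn ((n : ℝ) * D) ((n : ℝ) * R) ε δ (detEnc f) g} ∧
      sInf {R : ℝ | 0 ≤ R ∧ ∃ (f : (Fin n → 𝒳) → List Bool)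
          (g : List Bool → (Fin n → 𝒴)),
          IsCode pXn dn ((n : ℝ) * D) ((n : ℝ) * R) ε δ (detEnc f) g}
        ≤ ((Gq pXn dn ((n : ℝ) * D) ε δ).toReal + 3) / n := by
  set G := (Gq pXn dn ((n : ℝ) * D) ε δ).toReal
  set rates := {R : ℝ | 0 ≤ R ∧ ∃ (f : (Fin n → 𝒳) → List Bool → ℝ≥0∞)
    (g : List Bool → (Fin n → 𝒴)), IsCode pXn dn ((n : ℝ) * D) ((n : ℝ) * R) ε δ f g}
  set detRates := {R : ℝ | 0 ≤ R ∧ ∃ (f : (Fin n → 𝒳) → List Bool)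
    (g : List Bool → (Fin n → 𝒴)), IsCode pXn dn ((n : ℝ) * D) ((n : ℝ) * R) ε δ (detEnc f) g}
  have hn' : (0 : ℝ) < n := by exact_mod_cast hn
  have hmem : (G + 3) / n ∈ detRates := by
    refine ⟨by positivity, exists_detEnc_isCode hpXn hδ.1 hδ.2 hG ?_⟩
    rw [mul_div_cancel₀ _ hn'.ne']
    linarith
  have hsub : detRates ⊆ rates := fun R ⟨hR, f, g, hcode⟩ => ⟨hR, detEnc f, g, hcode⟩
  have hconv : ∀ R ∈ rates, (⌊G⌋ : ℝ) / n ≤ R := by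
    rintro R ⟨hR, f, g, hcode⟩
    rw [div_le_iff₀ hn', mul_comm]
    exact Int.floor_le_of_lt_natFloor_add_one (by positivity) (hcode.toReal_Gq_lt hpXn hδ.1)
  refine ⟨?_, csInf_le_csInf ⟨0, fun R hR => hR.1⟩ ⟨_, hmem⟩ hsub,
    csInf_le ⟨0, fun R hR => hR.1⟩ hmem⟩
  exact (div_lt_div_of_pos_right (Int.sub_one_lt_floor G) hn').trans_le
    (le_csInf ⟨_, hsub hmem⟩ hconv)

/-- General coding theorem at blocklength `n`: if `G^δ_{D,ε}(X^n) < ∞`, then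
`(G^δ_{D,ε}(X^n) - 1)/n < R*(n,D,ε,δ) ≤ R̃(n,D,ε,δ) ≤ (G^δ_{D,ε}(X^n) + 3)/n`.
Here an `(n,D,R,ε,δ)` code is a code for the source `X^n` with distortion threshold
`n·D` and length threshold `n·R`. -/
theorem stmt6 {𝒳 𝒴 : Type} [Fintype 𝒳] [Fintype 𝒴] [Nonempty 𝒳] [Nonempty 𝒴]
    (n : ℕ) (hn : 0 < n)
    (pXn : (Fin n → 𝒳) → ℝ≥0∞) (hpXn : ∑ x, pXn x = 1)
    (dn : (Fin n → 𝒳) → (Fin n → 𝒴) → ℝ) (hd : ∀ x y, 0 ≤ dn x y)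
    (D ε δ : ℝ) (hD : 0 ≤ D) (hε : 0 ≤ ε ∧ ε < 1) (hδ : 0 ≤ δ ∧ δ < 1)
    (hG : Gq pXn dn ((n : ℝ) * D) ε δ ≠ ⊤) :
    ((Gq pXn dn ((n : ℝ) * D) ε δ).toReal - 1) / n <
        sInf {R : ℝ | 0 ≤ R ∧ ∃ (f : (Fin n → 𝒳) → List Bool → ℝ≥0∞)
          (g : List Bool → (Fin n → 𝒴)),
          IsCode pXn dn ((n : ℝ) * D) ((n : ℝ) * R) ε δ f g} ∧
      sInf {R : ℝ | 0 ≤ R ∧ ∃ (f : (Fin n → 𝒳) → List Bool → ℝ≥0∞)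
          (g : List Bool → (Fin n → 𝒴)),
          IsCode pXn dn ((n : ℝ) * D) ((n : ℝ) * R) ε δ f g}
        ≤ sInf {R : ℝ | 0 ≤ R ∧ ∃ (f : (Fin n → 𝒳) → List Bool)
          (g : List Bool → (Fin n → 𝒴)),
          IsCode pXn dn ((n : ℝ) * D) ((n : ℝ) * R) ε δ (detEnc f) g} ∧
      sInf {R : ℝ | 0 ≤ R ∧ ∃ (f : (Fin n → 𝒳) → List Bool)
          (g : List Bool → (Fin n → 𝒴)),
          IsCode pXn dn ((n : ℝ) * D) ((n : ℝ) * R) ε δ (detEnc f) g}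
        ≤ ((Gq pXn dn ((n : ℝ) * D) ε δ).toReal + 3) / n :=
  stmt6_general n hn pXn hpXn dn D ε δ hδ hG

end
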